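/- Let M : I^p → I be a symmetric, locally C² mean and ξ_M its residuum. Then for every x ∈ I, ξ_M(x) = lim_{t→0} (2p²/((p−1)t²))·( M(x+t, x, …, x) − x − t/p ). -/

import Mathlib

open Filter

lemma one_dim_second_deriv_limit (g g' : ℝ → ℝ) (a b c : ℝ)
    (hg : ∀ᶠ t in nhds (0:ℝ), HasDerivAt g (g' t) t)
    (hg0 : g 0 = a) (hg'0 : g' 0 = b) (hg'' : HasDerivAt g' c 0) :
    Tendsto (fun t => (g t - a - b * t) / t ^ 2) (nhdsWithin (0:ℝ) {0}ᶜ) (nhds (c / 2)) := by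
  apply HasDerivAt.lhopital_zero_nhdsNE (f' := fun t => g' t - b) (g' := fun t => 2 * t)
  · filter_upwards [eventually_nhdsWithin_of_eventually_nhds hg] with t ht
    exact ((ht.sub_const a).sub ((hasDerivAt_id t).const_mul b)).congr_deriv (by simp)
  · filter_upwards with t
    simpa using hasDerivAt_pow 2 t
  · filter_upwards [self_mem_nhdsWithin] with t ht
    simp only [Set.mem_compl_iff, Set.mem_singleton_iff] at ht
    positivity
  · have hcont : ContinuousAt g 0 := (hg.self_of_nhds).continuousAt
    have : Tendsto (fun t => g t - a - b * t) (nhds (0:ℝ)) (nhds (g 0 - a - b * 0)) := by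
      exact (hcont.sub continuousAt_const).sub (continuousAt_const.mul continuousAt_id)
    rw [hg0] at this
    simpa using tendsto_nhdsWithin_of_tendsto_nhds this
  · have : Tendsto (fun t : ℝ => t ^ 2) (nhds (0:ℝ)) (nhds ((0:ℝ) ^ 2)) :=
      (continuous_pow 2).tendsto 0
    simpa using tendsto_nhdsWithin_of_tendsto_nhds this
  · have hs : Tendsto (slope g' 0) (nhdsWithin (0:ℝ) {0}ᶜ) (nhds c) :=
      hasDerivAt_iff_tendsto_slope.1 hg''
    have := hs.div_const 2
    apply this.congr'
    filter_upwards [self_mem_nhdsWithin] with t ht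
    simp only [Set.mem_compl_iff, Set.mem_singleton_iff] at ht
    rw [slope_def_field, hg'0, sub_zero, div_div, mul_comm]

set_option maxHeartbeats 1000000 in
/-- limit formula for the residuum:
ξ_M(x) = lim_{t→0} (2p²/((p−1)t²))·(M(x+t,x,…,x) − x − t/p). -/
theorem residuum_limit_formula (p : ℕ) (hp : 2 ≤ p) (I : Set ℝ) (hIopen : IsOpen I)
    (hIconn : I.OrdConnected) (M : (Fin p → ℝ) → ℝ)
    (hmean : ∀ y : Fin p → ℝ, (∀ i, y i ∈ I) →
      M y ∈ I ∧ (∃ i, y i ≤ M y) ∧ (∃ i, M y ≤ y i))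
    (hsym : ∀ (y : Fin p → ℝ) (σ : Equiv.Perm (Fin p)), M (y ∘ σ) = M y)
    (U : Set (Fin p → ℝ)) (hU : IsOpen U) (hdiag : ∀ x ∈ I, (fun _ => x) ∈ U)
    (hC2 : ContDiffOn ℝ 2 M U) :
    ∀ x ∈ I,
      Tendsto (fun t : ℝ =>
          (2 * (p : ℝ)^2 / (((p : ℝ) - 1) * t ^ 2))
            * (M (Function.update (fun _ => x) (⟨0, by omega⟩ : Fin p) (x + t)) - x - t / p))
        (nhdsWithin (0 : ℝ) {0}ᶜ)
        (nhds (-(p : ℝ)^2 * fderiv ℝ (fun z => fderiv ℝ M z (Pi.single (⟨1, hp⟩ : Fin p) 1))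
          (fun _ => x) (Pi.single (⟨0, by omega⟩ : Fin p) 1))) := by
  intro x hx
  have hpR : (2:ℝ) ≤ (p:ℝ) := by exact_mod_cast hp
  have hp1 : (p:ℝ) - 1 ≠ 0 := by linarith
  have hpne : (p:ℝ) ≠ 0 := by linarith
  set i0 : Fin p := ⟨0, by omega⟩ with hi0
  set i1 : Fin p := ⟨1, hp⟩ with hi1
  have hi01 : i1 ≠ i0 := by simp [hi0, hi1, Fin.ext_iff]
  -- basic objects
  set e : Fin p → (Fin p → ℝ) := fun i => Pi.single i 1 with he
  set cst : ℝ → (Fin p → ℝ) := fun y => fun _ => y with hcst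
  set P : Equiv.Perm (Fin p) → ((Fin p → ℝ) →L[ℝ] (Fin p → ℝ)) :=
    fun σ => ContinuousLinearMap.pi (fun i => ContinuousLinearMap.proj (σ i)) with hP
  have hPapp : ∀ σ (z : Fin p → ℝ), P σ z = z ∘ σ := fun σ z => rfl
  have hMP : ∀ σ (z : Fin p → ℝ), M (P σ z) = M z := fun σ z => hsym z σ
  have hPc : ∀ σ y, P σ (cst y) = cst y := fun σ y => rfl
  have hPe : ∀ σ j, P σ (e j) = e (σ.symm j) := by
    intro σ j
    funext k
    simp only [hPapp, Function.comp_apply, he, Pi.single_apply]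
    simp [Equiv.eq_symm_apply]
  -- mean value on the diagonal
  have hMdiag : ∀ y ∈ I, M (cst y) = y := by
    intro y hy
    obtain ⟨-, ⟨i, h1⟩, ⟨j, h2⟩⟩ := hmean (cst y) (fun _ => hy)
    simp only [hcst] at h1 h2
    linarith
  -- differentiability
  have hMdiff : ∀ z ∈ U, HasFDerivAt M (fderiv ℝ M z) z := by
    intro z hz
    exact ((hC2.contDiffAt (hU.mem_nhds hz)).differentiableAt two_ne_zero).hasFDerivAt
  -- first-order permutation symmetry
  have hA1 : ∀ σ, ∀ z ∈ U, P σ z ∈ U →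
      fderiv ℝ M z = (fderiv ℝ M (P σ z)).comp (P σ) := by
    intro σ z hz hz'
    have h1 : HasFDerivAt (fun w => M (P σ w)) ((fderiv ℝ M (P σ z)).comp (P σ)) z :=
      (hMdiff _ hz').comp z (P σ).hasFDerivAt
    have h2 : (fun w => M (P σ w)) = M := funext fun w => hMP σ w
    rw [h2] at h1
    exact (hMdiff z hz).unique h1
  -- the diagonal map
  set d : ℝ →L[ℝ] (Fin p → ℝ) := ContinuousLinearMap.pi (fun _ => ContinuousLinearMap.id ℝ ℝ)
    with hd
  have hdc : ∀ y, d y = cst y := fun y => rfl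
  have hsum : cst 1 = ∑ i, e i := by
    rw [he, Finset.univ_sum_single (fun _ => (1:ℝ))]
  -- all first partials on the diagonal are equal
  have heqpart : ∀ y ∈ I, ∀ i, fderiv ℝ M (cst y) (e i) = fderiv ℝ M (cst y) (e i0) := by
    intro y hy i
    have hU' : cst y ∈ U := hdiag y hy
    have := hA1 (Equiv.swap i i0) (cst y) hU' (by rw [hPc]; exact hU')
    have happ := congrArg (fun (L : (Fin p → ℝ) →L[ℝ] ℝ) => L (e i0)) this
    simp only [ContinuousLinearMap.comp_apply, hPc] at happ
    rw [hPe] at happ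
    simp only [Equiv.symm_swap, Equiv.swap_apply_right] at happ
    exact happ.symm
  -- first partial on the diagonal equals 1/p
  have hFc : ∀ y ∈ I, fderiv ℝ M (cst y) (e i0) = 1 / p := by
    intro y hy
    have hder1 : HasDerivAt (fun t => M (d t)) (fderiv ℝ M (cst y) (cst 1)) y := by
      have := ((hMdiff _ (hdiag y hy)).comp y d.hasFDerivAt).hasDerivAt
      exact this
    have hder2 : HasDerivAt (fun t => M (d t)) 1 y := by
      apply (hasDerivAt_id y).congr_of_eventuallyEq
      filter_upwards [hIopen.mem_nhds hy] with z hz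
      show M (d z) = z
      rw [hdc]
      exact hMdiag z hz
    have h1 : fderiv ℝ M (cst y) (cst 1) = 1 := hder1.unique hder2
    rw [hsum, map_sum] at h1
    have h2 : ∀ i ∈ Finset.univ, fderiv ℝ M (cst y) (e i) = fderiv ℝ M (cst y) (e i0) :=
      fun i _ => heqpart y hy i
    rw [Finset.sum_congr rfl h2, Finset.sum_const, Finset.card_univ, Fintype.card_fin,
      nsmul_eq_mul] at h1
    field_simp at h1 ⊢
    linarith
  -- second derivative at the diagonal point cst x
  have hCx : ContDiffAt ℝ 2 M (cst x) := hC2.contDiffAt (hU.mem_nhds (hdiag x hx))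
  have hG1 : ContDiffAt ℝ 1 (fderiv ℝ M) (cst x) := hCx.fderiv_right (by norm_num)
  set B : (Fin p → ℝ) →L[ℝ] (Fin p → ℝ) →L[ℝ] ℝ := fderiv ℝ (fderiv ℝ M) (cst x) with hBdef
  have hB : HasFDerivAt (fderiv ℝ M) B (cst x) :=
    (hG1.differentiableAt one_ne_zero).hasFDerivAt
  have hevU : ∀ᶠ z in nhds (cst x), z ∈ U := hU.mem_nhds (hdiag x hx)
  have hBsym : ∀ v w, B v w = B w v := by
    intro v w
    exact second_derivative_symmetric_of_eventually
      (by filter_upwards [hevU] with z hz; exact hMdiff z hz) hB v w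
  -- permutation invariance of the second derivative
  have hB2 : ∀ σ (u v : Fin p → ℝ), B u v = B (P σ u) (P σ v) := by
    intro σ u v
    set Cσ : ((Fin p → ℝ) →L[ℝ] ℝ) →L[ℝ] ((Fin p → ℝ) →L[ℝ] ℝ) :=
      (ContinuousLinearMap.compL ℝ (Fin p → ℝ) (Fin p → ℝ) ℝ).flip (P σ) with hCσ
    have hev : (fun z => Cσ (fderiv ℝ M (P σ z))) =ᶠ[nhds (cst x)] fderiv ℝ M := by
      have hV : ∀ᶠ z in nhds (cst x), z ∈ U ∧ P σ z ∈ U := by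
        refine hevU.and ?_
        have : ContinuousAt (fun z => P σ z) (cst x) := (P σ).continuous.continuousAt
        have := this.preimage_mem_nhds (by rw [hPc]; exact hU.mem_nhds (hdiag x hx))
        filter_upwards [this] with z hz using hz
      filter_upwards [hV] with z hz
      exact (hA1 σ z hz.1 hz.2).symm
    have hinner : HasFDerivAt (fun z => fderiv ℝ M (P σ z)) (B.comp (P σ)) (cst x) := by
      have : P σ (cst x) = cst x := hPc σ x
      exact HasFDerivAt.comp (cst x) (this ▸ hB) (P σ).hasFDerivAt
    have hR : HasFDerivAt (fun z => Cσ (fderiv ℝ M (P σ z)))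
        (Cσ.comp (B.comp (P σ))) (cst x) :=
      Cσ.hasFDerivAt.comp (cst x) hinner
    have hR' : HasFDerivAt (fderiv ℝ M) (Cσ.comp (B.comp (P σ))) (cst x) :=
      hR.congr_of_eventuallyEq hev.symm
    have hBeq : B = Cσ.comp (B.comp (P σ)) := hB.unique hR'
    calc B u v = (Cσ.comp (B.comp (P σ))) u v := by rw [← hBeq]
    _ = B (P σ u) (P σ v) := by
        simp [hCσ, ContinuousLinearMap.compL_apply]
  -- hF : derivative of z ↦ ∂_{i0} M(z)
  have hF : HasFDerivAt (fun z => fderiv ℝ M z (e i0)) (B.flip (e i0)) (cst x) := by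
    have := hB.clm_apply (hasFDerivAt_const (e i0) (cst x))
    simpa using this
  have hF1 : HasFDerivAt (fun z => fderiv ℝ M z (e i1)) (B.flip (e i1)) (cst x) := by
    have := hB.clm_apply (hasFDerivAt_const (e i1) (cst x))
    simpa using this
  have htarget : fderiv ℝ (fun z => fderiv ℝ M z (e i1)) (cst x) (e i0) = B (e i0) (e i1) := by
    rw [hF1.fderiv]; rfl
  -- sum of second partials vanishes
  have hsum0 : B (e i0) (e i0) + ((p:ℝ) - 1) * B (e i1) (e i0) = 0 := by
    have hder1 : HasDerivAt (fun y => fderiv ℝ M (d y) (e i0)) (B (cst 1) (e i0)) x := by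
      have := ((hF.comp x d.hasFDerivAt).hasDerivAt)
      exact this
    have hder2 : HasDerivAt (fun y => fderiv ℝ M (d y) (e i0)) 0 x := by
      apply (hasDerivAt_const x ((1:ℝ)/p)).congr_of_eventuallyEq
      filter_upwards [hIopen.mem_nhds hx] with z hz
      rw [hdc]
      exact hFc z hz
    have h0 : B (cst 1) (e i0) = 0 := hder1.unique hder2
    rw [hsum, map_sum, ContinuousLinearMap.sum_apply] at h0
    have hterm : ∀ i ∈ Finset.univ.erase i0, B (e i) (e i0) = B (e i1) (e i0) := by
      intro i hi
      have hii0 : i ≠ i0 := (Finset.mem_erase.1 hi).1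
      have := hB2 (Equiv.swap i i1) (e i1) (e i0)
      rw [hPe, hPe] at this
      simp only [Equiv.symm_swap, Equiv.swap_apply_right] at this
      rw [Equiv.swap_apply_of_ne_of_ne (Ne.symm hii0) (Ne.symm hi01)] at this
      exact this.symm
    rw [← Finset.sum_erase_add _ _ (Finset.mem_univ i0), Finset.sum_congr rfl hterm,
      Finset.sum_const, nsmul_eq_mul] at h0
    have hcard : ((Finset.univ.erase i0).card : ℝ) = (p:ℝ) - 1 := by
      rw [Finset.card_erase_of_mem (Finset.mem_univ i0), Finset.card_univ, Fintype.card_fin]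
      have : 1 ≤ p := by omega
      push_cast [Nat.cast_sub this]
      ring
    rw [hcard] at h0
    linarith
  have hkey : B (e i0) (e i0) = -((p:ℝ) - 1) * B (e i0) (e i1) := by
    rw [hBsym (e i0) (e i1)]
    linarith
  -- the one-dimensional function
  set φ : ℝ → (Fin p → ℝ) := fun t => cst x + t • e i0 with hφ
  have hφ0 : φ 0 = cst x := by
    funext j; simp [hφ, hcst]
  have hupd : ∀ t : ℝ, Function.update (cst x) i0 (x + t) = φ t := by
    intro t
    funext j
    by_cases h : j = i0
    · subst h; simp [hφ, hcst, he]
    · simp [hφ, hcst, he, Function.update_apply, h, Pi.single_apply]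
  have hφd : ∀ t : ℝ, HasDerivAt φ (e i0) t := by
    intro t
    have h1 : HasDerivAt (fun s : ℝ => s • e i0) ((1:ℝ) • e i0) t :=
      (hasDerivAt_id t).smul_const (e i0)
    rw [one_smul] at h1
    exact h1.const_add (cst x)
  have hφU : ∀ᶠ t in nhds (0:ℝ), φ t ∈ U := by
    have hcont : Continuous φ := by
      rw [hφ]; exact continuous_const.add (continuous_id.smul continuous_const)
    have := hcont.continuousAt.preimage_mem_nhds (x := (0:ℝ))
      (by rw [hφ0]; exact hU.mem_nhds (hdiag x hx))
    filter_upwards [this] with t ht using ht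
  set g : ℝ → ℝ := fun t => M (φ t) with hg_def
  set g' : ℝ → ℝ := fun t => fderiv ℝ M (φ t) (e i0) with hg'_def
  have hgd : ∀ᶠ t in nhds (0:ℝ), HasDerivAt g (g' t) t := by
    filter_upwards [hφU] with t ht
    exact (hMdiff _ ht).comp_hasDerivAt t (hφd t)
  have hg0 : g 0 = x := by rw [hg_def]; simp only [hφ0]; exact hMdiag x hx
  have hg'0 : g' 0 = 1 / p := by rw [hg'_def]; simp only [hφ0]; exact hFc x hx
  have hg'' : HasDerivAt g' (B (e i0) (e i0)) 0 := by
    have hF' : HasFDerivAt (fun z => fderiv ℝ M z (e i0)) (B.flip (e i0)) (φ 0) := by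
      rw [hφ0]; exact hF
    have h := hF'.comp_hasDerivAt 0 (hφd 0)
    exact h
  have hlim := one_dim_second_deriv_limit g g' x (1/p) (B (e i0) (e i0)) hgd hg0 hg'0 hg''
  have hlim2 := hlim.const_mul (2 * (p:ℝ)^2 / ((p:ℝ) - 1))
  have hmain : Tendsto (fun t : ℝ =>
      (2 * (p : ℝ)^2 / (((p : ℝ) - 1) * t ^ 2)) * (M (φ t) - x - t / p))
      (nhdsWithin (0 : ℝ) {0}ᶜ)
      (nhds (-(p:ℝ)^2 * B (e i0) (e i1))) := by
    have hval : 2 * (p:ℝ)^2 / ((p:ℝ) - 1) * (B (e i0) (e i0) / 2)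
        = -(p:ℝ)^2 * B (e i0) (e i1) := by
      rw [hkey]
      field_simp
    rw [← hval]
    apply hlim2.congr'
    filter_upwards [self_mem_nhdsWithin] with t ht
    simp only [Set.mem_compl_iff, Set.mem_singleton_iff] at ht
    simp only [hg_def]
    field_simp
  have hfun : ∀ t : ℝ, M (Function.update (fun _ => x) i0 (x + t)) = M (φ t) := by
    intro t
    rw [show (fun _ => x : Fin p → ℝ) = cst x from rfl, hupd t]
  have hval2 : fderiv ℝ (fun z => fderiv ℝ M z (Pi.single i1 1)) (fun _ => x)
      (Pi.single i0 1) = B (e i0) (e i1) := htarget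
  rw [hval2]
  apply hmain.congr
  intro t
  rw [hfun t]
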